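/- arXiv:math/9905051 — 2 statements merged into one kernel-verified Lean document; each statement's English description precedes it below -/
import Mathlib

section
/- Let n be a positive integer and let P_1, …, P_n ∈ ℂ[x_1, …, x_n] be homogeneous polynomials (P_i homogeneous of some degree d_i). Assume that the common zero set of P_1, …, P_n in ℂ^n contains a point different from the origin. Then the Jacobian J(P_1, …, P_n) belongs to the ideal of ℂ[x_1, …, x_n] generated by P_1, …, P_n. -/
/-!
Let `a ≠ 0` be a common zero of the `P k`, with `a i ≠ 0`. A homogeneous polynomial vanishing
at `a` lies in the ideal of the linear forms `a i X j - a j X i`, whose coefficient vectors span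
a proper subspace; hence `P = N X` for a singular matrix `N`. By Euler's identity the Jacobian
matrix `J` satisfies `J X = (d k P k) = D N X` with `D = diag (d k)`, so every row of `J - D N`
is a syzygy of `(X 1, …, X n)`, and in characteristic zero such syzygies are Koszul syzygies.
Modulo the ideal `(P)` every row of `D N` is orthogonal to `X`. Expanding
`det J = det (D N + (J - D N))` multilinearly in the rows, the term `det (D N)` vanishes, and every
other term has a Koszul row while its remaining rows are orthogonal to `X`; such a determinant
vanishes because, by Cramer's rule, the cofactors `C l` along that row satisfy `X p C l = X l C p`.
-/

open Matrix

section Koszul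

variable {ι S : Type*} [Fintype ι] [CommRing S]

/-- The Koszul syzygies `x p • e l - x l • e p` of `x`, combined with coefficients `c p l`;
`c` need not be antisymmetric. -/
def koszulSyzygy (x : ι → S) : (ι → ι → S) →ₗ[S] ι → S where
  toFun c l := ∑ p, (c p l - c l p) * x p
  map_add' c c' := by
    ext l
    simp only [Pi.add_apply, ← Finset.sum_add_distrib]
    exact Finset.sum_congr rfl fun p _ => by ring
  map_smul' s c := by
    ext l
    simp only [Pi.smul_apply, smul_eq_mul, RingHom.id_apply, Finset.mul_sum]
    exact Finset.sum_congr rfl fun p _ => by ring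

theorem koszulSyzygy_apply (x : ι → S) (c : ι → ι → S) (l : ι) :
    koszulSyzygy x c l = ∑ p, (c p l - c l p) * x p := rfl

theorem koszulSyzygy_dotProduct_self (x : ι → S) (c : ι → ι → S) :
    koszulSyzygy x c ⬝ᵥ x = 0 := by
  simp only [dotProduct, koszulSyzygy_apply, Finset.sum_mul, sub_mul, Finset.sum_sub_distrib]
  rw [Finset.sum_comm (f := fun l p => c l p * x p * x l)]
  exact sub_eq_zero.2 (Finset.sum_congr rfl fun _ _ => Finset.sum_congr rfl fun _ _ => by ring)

theorem map_koszulSyzygy {T : Type*} [CommRing T] (f : S →+* T) (x : ι → S) (c : ι → ι → S) :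
    f ∘ koszulSyzygy x c = koszulSyzygy (f ∘ x) fun p l => f (c p l) := by
  ext l
  simp [koszulSyzygy_apply]

variable [DecidableEq ι]

theorem mul_det_updateRow_single_comm {M : Matrix ι ι S} {x : ι → S} {i : ι}
    (hM : ∀ k ≠ i, (M *ᵥ x) k = 0) (p l : ι) :
    x p * (M.updateRow i (Pi.single l 1)).det = x l * (M.updateRow i (Pi.single p 1)).det := by
  set B := M.updateRow i (Pi.single l 1)
  have hBx : B *ᵥ x = Pi.single i (x l) := by
    ext k
    by_cases hk : k = i
    · subst hk; simp [B, mulVec, updateRow_self]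
    · simp [B, mulVec, hk, ← hM k hk]
  have := congrFun (mulVec_mulVec x B.adjugate B) p
  rw [adjugate_mul, smul_mulVec, one_mulVec, hBx] at this
  simpa [adjugate_apply, updateRow_idem, B, mul_comm] using this.symm

theorem det_updateRow_eq_sum (M : Matrix ι ι S) (i : ι) (v : ι → S) :
    (M.updateRow i v).det = ∑ l, v l * (M.updateRow i (Pi.single l 1)).det := by
  rw [det_eq_sum_mul_adjugate_row _ i]
  simp only [adjugate_apply, updateRow_idem, updateRow_self]

theorem det_updateRow_koszulSyzygy {M : Matrix ι ι S} {x : ι → S} {i : ι}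
    (hM : ∀ k ≠ i, (M *ᵥ x) k = 0) (c : ι → ι → S) :
    (M.updateRow i (koszulSyzygy x c)).det = 0 := by
  rw [det_updateRow_eq_sum]
  simp only [koszulSyzygy_apply, Finset.sum_mul, sub_mul, Finset.sum_sub_distrib]
  rw [sub_eq_zero, Finset.sum_comm]
  refine Finset.sum_congr rfl fun p _ => Finset.sum_congr rfl fun l _ => ?_
  rw [mul_assoc, mul_assoc, mul_det_updateRow_single_comm hM]

theorem det_add_eq_zero_of_koszulSyzygy {N K : Matrix ι ι S} {x : ι → S} (hN : N *ᵥ x = 0)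
    (hdet : N.det = 0) (hK : ∀ k, K k ∈ LinearMap.range (koszulSyzygy x)) :
    (N + K).det = 0 := by
  rw [add_comm]
  refine (detRowAlternating.map_add_univ K N).trans (Finset.sum_eq_zero fun s _ => ?_)
  change (of fun k => if k ∈ s then K k else N k).det = 0
  obtain rfl | ⟨i, hi⟩ := s.eq_empty_or_nonempty
  · exact hdet
  set M : Matrix ι ι S := of fun k => if k ∈ s then K k else N k
  have hM : ∀ k, M k = if k ∈ s then K k else N k := fun k => rfl
  have hrows : ∀ k, (M *ᵥ x) k = 0 := by
    intro k
    change M k ⬝ᵥ x = 0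
    by_cases hk : k ∈ s
    · obtain ⟨c, hc⟩ := hK k
      rw [hM, if_pos hk, ← hc, koszulSyzygy_dotProduct_self]
    · rw [hM, if_neg hk]
      exact congrFun hN k
  obtain ⟨c, hc⟩ := hK i
  rw [← updateRow_eq_self M i, hM, if_pos hi, ← hc]
  exact det_updateRow_koszulSyzygy (fun k _ => hrows k) c

theorem det_mem_of_sub_mem_range_koszulSyzygy {I : Ideal S} {M N : Matrix ι ι S} {x : ι → S}
    (hN : ∀ k, (N *ᵥ x) k ∈ I) (hdet : N.det ∈ I)
    (hMN : ∀ k, M k - N k ∈ LinearMap.range (koszulSyzygy x)) : M.det ∈ I := by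
  set π := Ideal.Quotient.mk I
  rw [← Ideal.Quotient.eq_zero_iff_mem] at hdet ⊢
  rw [RingHom.map_det] at hdet ⊢
  rw [← add_sub_cancel N M, map_add]
  refine det_add_eq_zero_of_koszulSyzygy (x := π ∘ x) ?_ hdet fun k => ?_
  · ext k
    rw [RingHom.mapMatrix_apply, ← RingHom.map_mulVec, Pi.zero_apply, Ideal.Quotient.eq_zero_iff_mem]
    exact hN k
  · obtain ⟨c, hc⟩ := hMN k
    refine ⟨fun p l => π (c p l), ?_⟩
    rw [← map_koszulSyzygy, hc]
    rfl

end Koszul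

namespace MvPolynomial

theorem IsHomogeneous.aeval_smul_eq {σ R A : Type*} [CommSemiring R] [CommSemiring A]
    [Algebra R A] {φ : MvPolynomial σ R} {m : ℕ} (hφ : φ.IsHomogeneous m) (a : σ → R) (t : A) :
    MvPolynomial.aeval (fun i => a i • t) φ = eval a φ • t ^ m := by
  rw [aeval_eq_eval₂Hom, coe_eval₂Hom, eval₂_eq, eval_eq, Finset.sum_smul]
  refine Finset.sum_congr rfl fun d hd => ?_
  simp only [Algebra.smul_def, mul_pow, Finset.prod_mul_distrib, Finset.prod_pow_eq_pow_sum,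
    ← hφ.degree_eq_sum_deg_support hd, map_mul, map_prod, map_pow]
  ring

theorem homogeneousComponent_mul_of_isHomogeneous {σ R : Type*} [CommSemiring R]
    {ψ : MvPolynomial σ R} {n : ℕ} (hψ : ψ.IsHomogeneous n) (m : ℕ) (φ : MvPolynomial σ R) :
    homogeneousComponent (m + n) (φ * ψ) = homogeneousComponent m φ * ψ := by
  induction φ using MvPolynomial.induction_on' with
  | monomial d c =>
    rw [homogeneousComponent_of_mem ((isHomogeneous_monomial c rfl).mul hψ),
      homogeneousComponent_of_mem (isHomogeneous_monomial c rfl)]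
    by_cases h : m = d.degree <;> simp [h]
  | add p q hp hq => rw [add_mul, map_add, map_add, hp, hq, add_mul]

theorem sum_range_homogeneousComponent {σ R : Type*} [CommSemiring R] {φ : MvPolynomial σ R}
    {N : ℕ} (h : φ.totalDegree < N) :
    ∑ δ ∈ Finset.range N, homogeneousComponent δ φ = φ := by
  rw [← Finset.sum_range_add_sum_Ico _ h, sum_homogeneousComponent, Finset.sum_eq_zero, add_zero]
  intro δ hδ
  exact homogeneousComponent_eq_zero _ _ (Finset.mem_Ico.1 hδ).1

theorem pderiv_dotProduct_X {σ R : Type*} [CommSemiring R] [Fintype σ] [DecidableEq σ]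
    (v : σ → MvPolynomial σ R) (l : σ) :
    pderiv l (v ⬝ᵥ X) = (fun p => pderiv l (v p)) ⬝ᵥ X + v l := by
  simp [dotProduct, pderiv_X, Finset.sum_add_distrib, Pi.single_apply, mul_comm, add_comm]

variable {σ K : Type*} [Field K]

theorem mem_span_of_isHomogeneous_of_eval_eq_zero {a : σ → K} {i : σ} (hi : a i ≠ 0)
    {φ : MvPolynomial σ K} {m : ℕ} (hφ : φ.IsHomogeneous m) (hφa : eval a φ = 0) :
    φ ∈ Ideal.span (Set.range fun j => C (a i) * X j - C (a j) * X i) := by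
  set L := Ideal.span (Set.range fun j => C (a i) * X j - C (a j) * X i)
  set π := Ideal.Quotient.mkₐ K L
  -- modulo `L` the vector of variables is `(X i / a i) • a`, so `φ ≡ φ(a) (X i / a i) ^ m`
  have hX : ∀ j, π (X j) = a j • ((a i)⁻¹ • π (X i)) := by
    intro j
    have : π (C (a i) * X j - C (a j) * X i) = 0 :=
      Ideal.Quotient.eq_zero_iff_mem.2 (Ideal.subset_span ⟨j, rfl⟩)
    rw [map_sub, map_mul, map_mul, sub_eq_zero, ← algebraMap_eq, AlgHom.commutes,
      AlgHom.commutes, ← Algebra.smul_def, ← Algebra.smul_def] at this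
    rw [smul_smul, mul_comm, ← smul_smul, ← this, smul_smul, inv_mul_cancel₀ hi, one_smul]
  rw [← Ideal.Quotient.eq_zero_iff_mem, ← Ideal.Quotient.mkₐ_eq_mk K]
  change π φ = 0
  rw [aeval_unique π,
    show π ∘ X = _ from _root_.funext hX, hφ.aeval_smul_eq, hφa, zero_smul]

variable [Fintype σ]

theorem exists_det_eq_zero_mulVec_X_eq_of_eval_eq_zero [DecidableEq σ] {a : σ → K} (ha : a ≠ 0)
    {P : σ → MvPolynomial σ K} {d : σ → ℕ} (hP : ∀ k, (P k).IsHomogeneous (d k))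
    (hPa : ∀ k, eval a (P k) = 0) :
    ∃ N : Matrix σ σ (MvPolynomial σ K), N.det = 0 ∧ N *ᵥ X = P := by
  obtain ⟨i, hi⟩ : ∃ i, a i ≠ 0 := Function.ne_iff.1 ha
  set B : Matrix σ σ (MvPolynomial σ K) := of fun j => Pi.single j (C (a i)) - Pi.single i (C (a j))
  have hBX : B *ᵥ X = fun j => C (a i) * X j - C (a j) * X i := by
    refine _root_.funext fun j => ?_
    simp [B, mulVec, dotProduct, sub_mul, Finset.sum_sub_distrib, Pi.single_apply]
  have hBi : B i = 0 := sub_self _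
  choose G hG using fun k => Ideal.mem_span_range_iff_exists_fun.1
    (mem_span_of_isHomogeneous_of_eval_eq_zero hi (hP k) (hPa k))
  refine ⟨of G * B, by
    rw [det_mul, det_eq_zero_of_row_eq_zero (A := B) i (congrFun hBi), mul_zero], ?_⟩
  rw [← mulVec_mulVec, hBX]
  exact _root_.funext hG

variable [CharZero K]

theorem mem_range_koszulSyzygy_of_isHomogeneous {w : σ → MvPolynomial σ K} {δ : ℕ}
    (hw : ∀ j, (w j).IsHomogeneous δ) (hwX : w ⬝ᵥ X = 0) :
    w ∈ LinearMap.range (koszulSyzygy X) := by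
  classical
  -- Euler gives `∑ p, X p * ∂ₚ (w l) = δ • w l`, and differentiating `w ⬝ᵥ X = 0` gives
  -- `∑ p, X p * ∂ₗ (w p) = - w l`
  refine ⟨fun p l => ((δ : K) + 1)⁻¹ • pderiv p (w l), _root_.funext fun l => ?_⟩
  have hδ : ((δ : K) + 1) ≠ 0 := by exact_mod_cast δ.succ_ne_zero
  have hrow : (fun p => pderiv l (w p)) ⬝ᵥ X = -w l := by
    rw [eq_neg_iff_add_eq_zero, ← pderiv_dotProduct_X, hwX, map_zero]
  have heuler := (hw l).sum_X_mul_pderiv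
  simp only [dotProduct] at hrow
  simp only [koszulSyzygy_apply, ← smul_sub, smul_mul_assoc, ← Finset.smul_sum, sub_mul,
    Finset.sum_sub_distrib, hrow]
  simp only [mul_comm _ (X _), heuler, sub_neg_eq_add]
  rw [← succ_nsmul, ← Nat.cast_smul_eq_nsmul K, Nat.cast_succ, smul_smul,
    inv_mul_cancel₀ hδ, one_smul]

theorem mem_range_koszulSyzygy_of_dotProduct_X_eq_zero {v : σ → MvPolynomial σ K}
    (hv : v ⬝ᵥ X = 0) : v ∈ LinearMap.range (koszulSyzygy X) := by
  set N := Finset.univ.sup (fun j => (v j).totalDegree) + 1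
  have hv_sum : v = ∑ δ ∈ Finset.range N, fun j => homogeneousComponent δ (v j) := by
    ext j
    rw [Finset.sum_apply, sum_range_homogeneousComponent]
    exact Nat.lt_succ_of_le (Finset.le_sup (f := fun j => (v j).totalDegree) (Finset.mem_univ j))
  rw [hv_sum]
  refine Submodule.sum_mem _ fun δ _ => mem_range_koszulSyzygy_of_isHomogeneous
    (fun j => homogeneousComponent_isHomogeneous δ (v j)) ?_
  simp only [dotProduct, ← homogeneousComponent_mul_of_isHomogeneous (isHomogeneous_X K _), ← map_sum]
  rw [← dotProduct, hv, map_zero]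

end MvPolynomial

open MvPolynomial

theorem jacobian_mem_ideal_of_homogeneous_nontrivial_zero_general
    (n : ℕ) (P : Fin n → MvPolynomial (Fin n) ℂ)
    (d : Fin n → ℕ) (hhom : ∀ i, (P i).IsHomogeneous (d i))
    (hzero : ∃ x : Fin n → ℂ, x ≠ 0 ∧ ∀ i : Fin n, eval x (P i) = 0) :
    Matrix.det (Matrix.of fun i j : Fin n => pderiv j (P i)) ∈
      Ideal.span (Set.range P) := by
  obtain ⟨a, ha, hPa⟩ := hzero
  obtain ⟨N, hNdet, hNX⟩ := exists_det_eq_zero_mulVec_X_eq_of_eval_eq_zero ha hhom hPa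
  set D : Matrix (Fin n) (Fin n) (MvPolynomial (Fin n) ℂ) := diagonal fun i => (d i : _)
  have hJX : (of fun i j : Fin n => pderiv j (P i)) *ᵥ X = fun i => (d i : _) * P i := by
    refine _root_.funext fun i => ?_
    simp only [mulVec, dotProduct, of_apply, mul_comm _ (X _), (hhom i).sum_X_mul_pderiv,
      nsmul_eq_mul]
  have hDNX : (D * N) *ᵥ X = fun i => (d i : _) * P i := by
    rw [← mulVec_mulVec, hNX]
    exact _root_.funext (mulVec_diagonal _ _)
  refine det_mem_of_sub_mem_range_koszulSyzygy (N := D * N) (x := X) (fun k => ?_) ?_ fun k => ?_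
  · rw [hDNX]
    exact Ideal.mul_mem_left _ _ (Ideal.subset_span ⟨k, rfl⟩)
  · rw [det_mul, hNdet, mul_zero]
    exact zero_mem _
  · refine mem_range_koszulSyzygy_of_dotProduct_X_eq_zero ?_
    rw [sub_dotProduct, sub_eq_zero]
    have h := congrFun (hJX.trans hDNX.symm) k
    simp only [mulVec] at h
    exact h

/-- If `P_1, …, P_n` are homogeneous polynomials in `n` variables whose common zero set
contains a point other than the origin, then the Jacobian determinant lies in the ideal
generated by `P_1, …, P_n`. -/
theorem jacobian_mem_ideal_of_homogeneous_nontrivial_zero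
    (n : ℕ) (hn : 0 < n) (P : Fin n → MvPolynomial (Fin n) ℂ)
    (d : Fin n → ℕ) (hhom : ∀ i, (P i).IsHomogeneous (d i))
    (hzero : ∃ x : Fin n → ℂ, x ≠ 0 ∧ ∀ i : Fin n, eval x (P i) = 0) :
    Matrix.det (Matrix.of fun i j : Fin n => pderiv j (P i)) ∈
      Ideal.span (Set.range P) :=
  jacobian_mem_ideal_of_homogeneous_nontrivial_zero_general n P d hhom hzero
end

section
/- Let C > 0, let L ∈ ℂ, and let Φ : (0, ∞) → ℂ be a bounded measurable function such that Φ(ε) = 0 for all ε ≥ C and Φ(ε) → L as ε → 0⁺. Then the function λ ↦ λ · ∫₀^∞ Φ(ε) ε^{λ−1} dε (which is well defined for real λ > 0, the integral being absolutely convergent) tends to L as λ → 0⁺ along positive real values of λ. -/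
/-!
The substitution `x = ε ^ λ` turns `λ ∫₀^∞ Φ(ε) ε^(λ-1) dε` into `∫₀^∞ Φ(x ^ (1/λ)) dx`.
As `λ → 0⁺`, `x ^ (1/λ)` tends to `0` for `x < 1` and to `∞` for `x > 1`, so the integrand
tends to `L` on `(0, 1)` and vanishes eventually on `(1, ∞)`. For `λ ≤ 1` it is dominated by
`M` on `(0, max C 1]` and vanishes beyond, so dominated convergence gives the limit `L`.
-/

open Filter Set MeasureTheory Topology

variable {E : Type*} [NormedAddCommGroup E]

theorem smul_integral_rpow_smul_eq_integral_comp_rpow_inv [NormedSpace ℝ E] (f : ℝ → E)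
    {lam : ℝ} (hlam : 0 < lam) :
    lam • ∫ ε in Ioi (0 : ℝ), ε ^ (lam - 1) • f ε = ∫ x in Ioi (0 : ℝ), f (x ^ lam⁻¹) := by
  rw [← integral_comp_rpow_Ioi _ (inv_ne_zero hlam.ne'), ← integral_smul]
  refine setIntegral_congr_fun measurableSet_Ioi fun x (hx : 0 < x) => ?_
  have hexp : lam⁻¹ - 1 + lam⁻¹ * (lam - 1) = 0 := by field_simp; ring
  have hscalar : lam * (|lam⁻¹| * x ^ (lam⁻¹ - 1)) * (x ^ lam⁻¹) ^ (lam - 1) = 1 := by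
    rw [abs_of_pos (inv_pos.2 hlam), ← Real.rpow_mul hx.le, mul_assoc, mul_assoc,
      ← Real.rpow_add hx, hexp, Real.rpow_zero, mul_one, mul_inv_cancel₀ hlam.ne']
  rw [smul_smul, smul_smul, hscalar, one_smul]

theorem tendsto_rpow_inv_nhdsGT_zero_of_lt_one {x : ℝ} (hx₀ : 0 < x) (hx₁ : x < 1) :
    Tendsto (fun lam : ℝ => x ^ lam⁻¹) (𝓝[>] 0) (𝓝[>] 0) :=
  tendsto_nhdsWithin_iff.2
    ⟨(tendsto_rpow_atTop_of_base_lt_one x (by linarith) hx₁).comp tendsto_inv_nhdsGT_zero,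
      Eventually.of_forall fun _ => Real.rpow_pos_of_pos hx₀ _⟩

theorem tendsto_rpow_inv_atTop_of_one_lt {x : ℝ} (hx : 1 < x) :
    Tendsto (fun lam : ℝ => x ^ lam⁻¹) (𝓝[>] 0) atTop :=
  (tendsto_rpow_atTop_of_base_gt_one x hx).comp tendsto_inv_nhdsGT_zero

section

variable {Φ : ℝ → E} {C M : ℝ} {L : E}

theorem tendsto_comp_rpow_inv_indicator_Ioo (hsupp : ∀ ε, C ≤ ε → Φ ε = 0)
    (hlim : Tendsto Φ (𝓝[>] 0) (𝓝 L)) {x : ℝ} (hx₀ : 0 < x) (hx₁ : x ≠ 1) :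
    Tendsto (fun lam : ℝ => Φ (x ^ lam⁻¹)) (𝓝[>] 0)
      (𝓝 ((Ioo 0 1).indicator (fun _ => L) x)) := by
  rcases hx₁.lt_or_gt with hlt | hgt
  · rw [indicator_of_mem (mem_Ioo.2 ⟨hx₀, hlt⟩)]
    exact hlim.comp (tendsto_rpow_inv_nhdsGT_zero_of_lt_one hx₀ hlt)
  · rw [indicator_of_notMem fun h => hgt.not_gt h.2]
    refine tendsto_const_nhds.congr' ?_
    filter_upwards [(tendsto_rpow_inv_atTop_of_one_lt hgt).eventually_ge_atTop C] with lam hlam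
    exact (hsupp _ hlam).symm

theorem norm_comp_rpow_inv_le_indicator (hbd : ∀ ε, 0 < ε → ‖Φ ε‖ ≤ M)
    (hsupp : ∀ ε, C ≤ ε → Φ ε = 0) {lam : ℝ} (hlam : lam ∈ Ioc 0 1) {x : ℝ} (hx : 0 < x) :
    ‖Φ (x ^ lam⁻¹)‖ ≤ (Ioc 0 (max C 1)).indicator (fun _ => M) x := by
  by_cases hxB : x ≤ max C 1
  · rw [indicator_of_mem (mem_Ioc.2 ⟨hx, hxB⟩)]
    exact hbd _ (Real.rpow_pos_of_pos hx _)
  · rw [not_le, max_lt_iff] at hxB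
    have hx_le : x ≤ x ^ lam⁻¹ :=
      Real.self_le_rpow_of_one_le hxB.2.le ((one_le_inv₀ hlam.1).2 hlam.2)
    rw [indicator_of_notMem fun h => h.2.not_gt (max_lt hxB.1 hxB.2),
      hsupp _ (hxB.1.le.trans hx_le), norm_zero]

theorem tendsto_integral_comp_rpow_inv [NormedSpace ℝ E] [CompleteSpace E]
    (hmeas : StronglyMeasurable Φ) (hbd : ∀ ε, 0 < ε → ‖Φ ε‖ ≤ M) (hsupp : ∀ ε, C ≤ ε → Φ ε = 0)
    (hlim : Tendsto Φ (𝓝[>] 0) (𝓝 L)) :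
    Tendsto (fun lam : ℝ => ∫ x in Ioi (0 : ℝ), Φ (x ^ lam⁻¹)) (𝓝[>] 0) (𝓝 L) := by
  have hL : ∫ x in Ioi (0 : ℝ), (Ioo 0 1).indicator (fun _ => L) x = L := by
    rw [integral_indicator_const _ measurableSet_Ioo,
      measureReal_restrict_apply measurableSet_Ioo,
      inter_eq_self_of_subset_left Ioo_subset_Ioi_self]
    simp
  rw [← hL]
  refine tendsto_integral_filter_of_dominated_convergence
    ((Ioc 0 (max C 1)).indicator fun _ => M) ?meas ?bound
    ((integrableOn_const measure_Ioc_lt_top.ne).integrable_indicator measurableSet_Ioc).restrict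
    ?lim
  case meas =>
    filter_upwards [self_mem_nhdsWithin] with lam (hlam : 0 < lam)
    exact (hmeas.comp_measurable (Real.continuous_rpow_const (inv_nonneg.2 hlam.le)).measurable
      ).aestronglyMeasurable
  case bound =>
    filter_upwards [Ioc_mem_nhdsGT zero_lt_one] with lam hlam
    exact (ae_restrict_iff' measurableSet_Ioi).2 <| Eventually.of_forall fun x hx =>
      norm_comp_rpow_inv_le_indicator hbd hsupp hlam hx
  case lim =>
    filter_upwards [ae_restrict_mem measurableSet_Ioi,
      ae_restrict_of_ae (measure_singleton (1 : ℝ) |> measure_eq_zero_iff_ae_notMem.1)]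
      with x hx₀ hx₁
    exact tendsto_comp_rpow_inv_indicator_Ioo hsupp hlim hx₀ hx₁

end

theorem tendsto_mellin_of_tendsto_zero_general
    (C : ℝ) (L : ℂ) (Φ : ℝ → ℂ)
    (hmeas : Measurable Φ)
    (hbd : ∃ M : ℝ, ∀ ε : ℝ, 0 < ε → ‖Φ ε‖ ≤ M)
    (hsupp : ∀ ε : ℝ, C ≤ ε → Φ ε = 0)
    (hlim : Tendsto Φ (nhdsWithin 0 (Ioi 0)) (nhds L)) :
    Tendsto (fun lam : ℝ => (lam : ℂ) * ∫ ε in Ioi (0 : ℝ), (ε ^ (lam - 1)) • Φ ε)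
      (nhdsWithin 0 (Ioi 0)) (nhds L) := by
  obtain ⟨M, hM⟩ := hbd
  refine (tendsto_integral_comp_rpow_inv hmeas.stronglyMeasurable hM hsupp hlim).congr' ?_
  filter_upwards [self_mem_nhdsWithin] with lam (hlam : 0 < lam)
  rw [← Complex.real_smul, smul_integral_rpow_smul_eq_integral_comp_rpow_inv Φ hlam]

/-- Abelian theorem for the normalized Mellin transform: if `Φ` is bounded, measurable,
vanishes for `ε ≥ C`, and tends to `L` as `ε → 0⁺`, then
`λ ↦ λ ∫₀^∞ Φ(ε) ε^(λ-1) dε → L` as `λ → 0⁺`. -/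
theorem tendsto_mellin_of_tendsto_zero
    (C : ℝ) (hC : 0 < C) (L : ℂ) (Φ : ℝ → ℂ)
    (hmeas : Measurable Φ)
    (hbd : ∃ M : ℝ, ∀ ε : ℝ, 0 < ε → ‖Φ ε‖ ≤ M)
    (hsupp : ∀ ε : ℝ, C ≤ ε → Φ ε = 0)
    (hlim : Tendsto Φ (nhdsWithin 0 (Ioi 0)) (nhds L)) :
    Tendsto (fun lam : ℝ => (lam : ℂ) * ∫ ε in Ioi (0 : ℝ), (ε ^ (lam - 1)) • Φ ε)
      (nhdsWithin 0 (Ioi 0)) (nhds L) :=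
  tendsto_mellin_of_tendsto_zero_general C L Φ hmeas hbd hsupp hlim
end
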